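/- arXiv:2204.09018 — 3 statements merged into one kernel-verified Lean document; each statement's English description precedes it below -/
import Mathlib

section
/- Let C be a monoidal category such that the strong monoidal forgetful functor U : Z(C) → C from the Drinfeld center admits a left adjoint L. Equip F := L(𝟙_C) with the comonoid structure in Z(C) obtained by applying the oplax monoidal functor L (oplax monoidal by doctrinal adjunction, since its right adjoint U is strong monoidal) to the trivial comonoid 𝟙_C; explicitly, the comultiplication δ : F → F ⊗ F is the adjoint transpose of the composite 𝟙 ≅ 𝟙 ⊗ 𝟙 → U(F) ⊗ U(F) ≅ U(F ⊗ F) built from the unit of the adjunction L ⊣ U in both factors, and the counit is the transpose of the identity of 𝟙_C. Then F is braided cocommutative: c_{F,F} ∘ δ = δ, where c denotes the braiding of Z(C). -/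
/-!
Let `C` be a monoidal category such that the strong monoidal forgetful functor
`U : Z(C) ⟶ C` from the Drinfeld center admits a left adjoint `L`.  Equip
`F := L(𝟙_C)` with the comultiplication `δ : F ⟶ F ⊗ F` which is the adjoint
transpose of the composite `𝟙 ≅ 𝟙 ⊗ 𝟙 ⟶ U F ⊗ U F ≅ U (F ⊗ F)` built from the
unit of the adjunction `L ⊣ U` in both factors (this is the comonoid structure
obtained by applying the oplax monoidal functor `L` to the trivial comonoid
`𝟙_C`; the counit is the transpose of the identity of `𝟙_C`).  Then `F` is
braided cocommutative: `c_{F,F} ∘ δ = δ` for the braiding `c` of the Drinfeld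
center.
-/

open CategoryTheory MonoidalCategory Functor.LaxMonoidal Functor.OplaxMonoidal

namespace Stmt1

variable {C : Type*} [Category C] [MonoidalCategory C]

/-- The canonical coalgebra `F = L(𝟙)` in the Drinfeld center. -/
noncomputable abbrev canonicalCoalgebra (L : C ⥤ Center C)
    (_ : L ⊣ Center.forget C) : Center C :=
  L.obj (𝟙_ C)

/-- The comultiplication on `F = L(𝟙)`: the adjoint transpose of the composite
`𝟙 ≅ 𝟙 ⊗ 𝟙 ⟶ U F ⊗ U F ≅ U (F ⊗ F)` built from the unit of `L ⊣ U` in both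
factors. -/
noncomputable def canonicalComul (L : C ⥤ Center C) (adj : L ⊣ Center.forget C) :
    canonicalCoalgebra L adj ⟶ canonicalCoalgebra L adj ⊗ canonicalCoalgebra L adj :=
  (adj.homEquiv (𝟙_ C) (canonicalCoalgebra L adj ⊗ canonicalCoalgebra L adj)).symm
    ((λ_ (𝟙_ C)).inv ≫ (adj.unit.app (𝟙_ C) ⊗ₘ adj.unit.app (𝟙_ C)) ≫
      (Functor.Monoidal.μIso (Center.forget C) (canonicalCoalgebra L adj)
        (canonicalCoalgebra L adj)).hom)

/-- The counit on `F = L(𝟙)`: the adjoint transpose of the identity of `𝟙_C`. -/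
noncomputable def canonicalCounit (L : C ⥤ Center C) (adj : L ⊣ Center.forget C) :
    canonicalCoalgebra L adj ⟶ 𝟙_ (Center C) :=
  (adj.homEquiv (𝟙_ C) (𝟙_ (Center C))).symm
    ((Functor.Monoidal.εIso (Center.forget C)).hom)

theorem _root_.CategoryTheory.Center.halfBraiding_tensorUnit (X : Center C) :
    (X.2.β (𝟙_ C)).hom = (ρ_ X.1).hom ≫ (λ_ X.1).inv := by
  rw [Iso.eq_comp_inv]
  exact congrArg Center.Hom.f (braiding_leftUnitor X)

theorem _root_.CategoryTheory.Center.tensorHom_comp_halfBraiding (X : Center C) {Y : C}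
    (f : 𝟙_ C ⟶ X.1) (g : 𝟙_ C ⟶ Y) : (f ⊗ₘ g) ≫ (X.2.β Y).hom = g ⊗ₘ f := by
  calc (f ⊗ₘ g) ≫ (X.2.β Y).hom
      = (f ▷ 𝟙_ C) ≫ (X.2.β (𝟙_ C)).hom ≫ (g ▷ X.1) := by
        rw [MonoidalCategory.tensorHom_def, Category.assoc, HalfBraiding.naturality]
    _ = (ρ_ (𝟙_ C)).hom ≫ f ≫ (λ_ X.1).inv ≫ (g ▷ X.1) := by
        rw [Center.halfBraiding_tensorUnit, Category.assoc, rightUnitor_naturality_assoc]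
    _ = g ⊗ₘ f := by
        rw [leftUnitor_inv_naturality_assoc, ← unitors_equal, Iso.hom_inv_id_assoc,
          ← tensorHom_def']

theorem _root_.CategoryTheory.Center.μ_forget_comp_map_braiding (X Y : Center C) :
    μ (Center.forget C) X Y ≫ (Center.forget C).map (β_ X Y).hom =
      (X.2.β Y.1).hom ≫ μ (Center.forget C) Y X :=
  (Category.id_comp _).trans (Category.comp_id _).symm

/-- The canonical coalgebra `F = L(𝟙)` in the Drinfeld center is braided
cocommutative. -/
theorem canonicalCoalgebra_braided_cocommutative
    (L : C ⥤ Center C) (adj : L ⊣ Center.forget C) :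
    canonicalComul L adj ≫
        (β_ (canonicalCoalgebra L adj) (canonicalCoalgebra L adj)).hom =
      canonicalComul L adj := by
  rw [canonicalComul, ← Adjunction.homEquiv_naturality_right_symm]
  congr 1
  -- the transpose of `δ` is `η ⊗ η`, a tensor square of a point, which the half-braiding fixes
  rw [Functor.Monoidal.μIso_hom, Category.assoc, Category.assoc,
    Center.μ_forget_comp_map_braiding]
  exact congrArg _ ((Category.assoc _ _ _).symm.trans
    (congrArg (· ≫ _) (Center.tensorHom_comp_halfBraiding _ _ _)))

end Stmt1
end

section
/- Let C be a rigid monoidal category, with left duals X^∨, evaluations d_X : X^∨ ⊗ X → 𝟙 and coevaluations b_X : 𝟙 → X ⊗ X^∨, in which the canonical end 𝔸 = ∫_{X∈C} X ⊗ X^∨ exists, with projections π_X : 𝔸 → X ⊗ X^∨. Then the coevaluations b_X form a wedge, so there is a unique morphism u : 𝟙 → 𝔸 with π_X ∘ u = b_X for all X; moreover u is a split monomorphism: the composite of u with π_𝟙 : 𝔸 → 𝟙 ⊗ 𝟙^∨ followed by the canonical isomorphism 𝟙 ⊗ 𝟙^∨ ≅ 𝟙 equals the identity of 𝟙. -/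
/-!
Let `C` be a rigid monoidal category (with `X^∨` the dual of `X`, evaluation
`d_X : X^∨ ⊗ X ⟶ 𝟙` and coevaluation `b_X : 𝟙 ⟶ X ⊗ X^∨`; in Mathlib's
conventions `X^∨ = Xᘁ`, `d_X = ε_ X Xᘁ`, `b_X = η_ X Xᘁ`) in which the
canonical end `𝔸 = ∫_{X ∈ C} X ⊗ X^∨` exists, with projections
`π_X : 𝔸 ⟶ X ⊗ X^∨`.  Then the coevaluations form a wedge, so there is a
unique `u : 𝟙 ⟶ 𝔸` with `π_X ∘ u = b_X` for all `X`; moreover `u` is a split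
monomorphism: composing `u` with `π_𝟙` and the canonical isomorphism
`𝟙 ⊗ 𝟙^∨ ≅ 𝟙` gives the identity of `𝟙`.
-/

open CategoryTheory MonoidalCategory

namespace Stmt6

variable (C : Type*) [Category C] [MonoidalCategory C] [RigidCategory C]

/-- The canonical end `𝔸 = ∫_{X ∈ C} X ⊗ X^∨` of a rigid monoidal category:
an object `obj` together with projections `π X : obj ⟶ X ⊗ Xᘁ` forming a
universal wedge for the functor `(X, Y) ↦ Y ⊗ X^∨` (dinaturality is the
`wedge` field; universality is expressed by `lift`, `fac` and `uniq`). -/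
structure CanonicalEnd where
  /-- The underlying object of the end. -/
  obj : C
  /-- The projections of the end. -/
  π : ∀ X : C, obj ⟶ X ⊗ (Xᘁ : C)
  /-- Dinaturality of the projections. -/
  wedge : ∀ {X Y : C} (f : X ⟶ Y), π X ≫ (f ▷ (Xᘁ : C)) = π Y ≫ (Y ◁ (fᘁ))
  /-- Universal factorization through any other wedge. -/
  lift : ∀ {A : C} (p : ∀ X : C, A ⟶ X ⊗ (Xᘁ : C)),
    (∀ {X Y : C} (f : X ⟶ Y), p X ≫ (f ▷ (Xᘁ : C)) = p Y ≫ (Y ◁ (fᘁ))) → (A ⟶ obj)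
  fac : ∀ {A : C} (p : ∀ X : C, A ⟶ X ⊗ (Xᘁ : C))
    (hp : ∀ {X Y : C} (f : X ⟶ Y), p X ≫ (f ▷ (Xᘁ : C)) = p Y ≫ (Y ◁ (fᘁ)))
    (X : C), lift p hp ≫ π X = p X
  uniq : ∀ {A : C} (p : ∀ X : C, A ⟶ X ⊗ (Xᘁ : C))
    (hp : ∀ {X Y : C} (f : X ⟶ Y), p X ≫ (f ▷ (Xᘁ : C)) = p Y ≫ (Y ◁ (fᘁ)))
    (m : A ⟶ obj), (∀ X : C, m ≫ π X = p X) → m = lift p hp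

variable {C}

/-- The canonical morphism `𝟙 ⊗ 𝟙^∨ ⟶ 𝟙` (an isomorphism), stated for any
object `D` exactly paired with `𝟙` (e.g. the chosen dual `𝟙^∨`). -/
noncomputable def unitDualIso (D : C) [ExactPairing (𝟙_ C) D] : (𝟙_ C) ⊗ D ⟶ 𝟙_ C :=
  (λ_ _).hom ≫ (ρ_ _).inv ≫ (ε_ (𝟙_ C) D)

/-- Auxiliary: the coevaluation composed with `unitDualIso` is the identity. -/
lemma eta_unitDualIso (D : C) [ExactPairing (𝟙_ C) D] :
    η_ (𝟙_ C) D ≫ unitDualIso D = 𝟙 (𝟙_ C) := by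
  have h := ExactPairing.evaluation_coevaluation (𝟙_ C) D
  rw [unitDualIso]
  calc η_ (𝟙_ C) D ≫ (λ_ D).hom ≫ (ρ_ D).inv ≫ ε_ (𝟙_ C) D
      = η_ (𝟙_ C) D ≫ (ρ_ (𝟙_ C ⊗ D)).inv ≫ (α_ (𝟙_ C) D (𝟙_ C)).hom ≫
          (λ_ (D ⊗ 𝟙_ C)).hom ≫ ε_ (𝟙_ C) D := by monoidal
    _ = (ρ_ (𝟙_ C)).inv ≫ (η_ (𝟙_ C) D ▷ 𝟙_ C ≫ (α_ (𝟙_ C) D (𝟙_ C)).hom ≫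
          (𝟙_ C) ◁ ε_ (𝟙_ C) D) ≫ (λ_ (𝟙_ C)).hom := by
        rw [rightUnitor_inv_naturality_assoc, ← leftUnitor_naturality]
        simp
    _ = 𝟙 (𝟙_ C) := by rw [h]; monoidal

/-- The coevaluations form a wedge into the canonical end; the unique resulting
morphism `u : 𝟙 ⟶ 𝔸` with `π_X ∘ u = b_X` is a split monomorphism, split by
the unit component `π_𝟙` followed by the canonical isomorphism `𝟙 ⊗ 𝟙^∨ ≅ 𝟙`. -/
theorem coevaluation_wedge_unit (E : CanonicalEnd C) :
    (∀ {X Y : C} (f : X ⟶ Y),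
      (η_ X (Xᘁ)) ≫ (f ▷ (Xᘁ : C)) = (η_ Y (Yᘁ)) ≫ (Y ◁ (fᘁ))) ∧
    (∃! u : 𝟙_ C ⟶ E.obj, ∀ X : C, u ≫ E.π X = η_ X (Xᘁ)) ∧
    (∀ u : 𝟙_ C ⟶ E.obj, (∀ X : C, u ≫ E.π X = η_ X (Xᘁ)) →
      u ≫ E.π (𝟙_ C) ≫ unitDualIso _ = 𝟙 (𝟙_ C)) := by
  have hw : ∀ {X Y : C} (f : X ⟶ Y),
      (η_ X (Xᘁ)) ≫ (f ▷ (Xᘁ : C)) = (η_ Y (Yᘁ)) ≫ (Y ◁ (fᘁ)) := fun f =>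
    (coevaluation_comp_rightAdjointMate f).symm
  refine ⟨hw, ⟨E.lift _ hw, E.fac _ hw, fun u hu => E.uniq _ hw u hu⟩, fun u hu => ?_⟩
  rw [reassoc_of% (hu (𝟙_ C))]
  exact eta_unitDualIso _
end Stmt6
end

section
/- Let k be a commutative ring and let C be a k-linear rigid monoidal category (composition and the tensor product of morphisms are k-bilinear) in which the canonical end 𝔸 = ∫_{X∈C} X ⊗ X^∨ exists, equipped with the multiplication γ : 𝔸 ⊗ 𝔸 → 𝔸 determined by π_X ∘ γ = (X ◁ d_X ▷ X^∨) ∘ (π_X ⊗ π_X) and the unit u : 𝟙 → 𝔸 determined by π_X ∘ u = b_X. Equip the k-module C(𝟙, 𝔸) with the product f · g := γ ∘ (f ⊗ g) ∘ λ_𝟙^{-1} and unit u. Then the map Θ : C(𝟙, 𝔸) → End(𝟭_C) sending f to the natural transformation of the identity functor whose component at X is the composite X ≅ 𝟙 ⊗ X → 𝔸 ⊗ X → (X ⊗ X^∨) ⊗ X ≅ X ⊗ (X^∨ ⊗ X) → X ⊗ 𝟙 ≅ X (using f ▷ X, then π_X ▷ X, then X ◁ d_X) is well defined (its components are natural) and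 is an isomorphism of k-algebras, where End(𝟭_C), the k-algebra of natural endomorphisms of the identity functor under composition, is the zeroth Hochschild cohomology HH^0(C). -/
/-!
Let `k` be a commutative ring and `C` a `k`-linear rigid monoidal category
(composition and tensor product of morphisms are `k`-bilinear) in which the
canonical end `𝔸 = ∫_{X ∈ C} X ⊗ X^∨` exists, equipped with the multiplication
`γ : 𝔸 ⊗ 𝔸 ⟶ 𝔸` determined by `π_X ∘ γ = (X ◁ d_X ▷ X^∨) ∘ (π_X ⊗ π_X)` and
the unit `u : 𝟙 ⟶ 𝔸` determined by `π_X ∘ u = b_X`.  Equip `C(𝟙, 𝔸)` with the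
product `f · g := γ ∘ (f ⊗ g) ∘ λ_𝟙⁻¹` and unit `u`.  Then the map
`Θ : C(𝟙, 𝔸) → End(𝟭_C)` sending `f` to the natural endomorphism of the
identity functor with components
`X ≅ 𝟙 ⊗ X ⟶ 𝔸 ⊗ X ⟶ (X ⊗ X^∨) ⊗ X ≅ X ⊗ (X^∨ ⊗ X) ⟶ X ⊗ 𝟙 ≅ X`
is well defined (its components are natural) and an isomorphism of
`k`-algebras onto `End(𝟭_C) = HH⁰(C)`.
-/

open CategoryTheory MonoidalCategory

namespace Stmt13

variable (C : Type*) [Category C] [MonoidalCategory C] [RigidCategory C]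

/-- The canonical end `𝔸 = ∫_{X ∈ C} X ⊗ X^∨`. -/
structure CanonicalEnd where
  obj : C
  π : ∀ X : C, obj ⟶ X ⊗ (Xᘁ : C)
  wedge : ∀ {X Y : C} (f : X ⟶ Y), π X ≫ (f ▷ (Xᘁ : C)) = π Y ≫ (Y ◁ (fᘁ))
  lift : ∀ {A : C} (p : ∀ X : C, A ⟶ X ⊗ (Xᘁ : C)),
    (∀ {X Y : C} (f : X ⟶ Y), p X ≫ (f ▷ (Xᘁ : C)) = p Y ≫ (Y ◁ (fᘁ))) → (A ⟶ obj)
  fac : ∀ {A : C} (p : ∀ X : C, A ⟶ X ⊗ (Xᘁ : C))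
    (hp : ∀ {X Y : C} (f : X ⟶ Y), p X ≫ (f ▷ (Xᘁ : C)) = p Y ≫ (Y ◁ (fᘁ)))
    (X : C), lift p hp ≫ π X = p X
  uniq : ∀ {A : C} (p : ∀ X : C, A ⟶ X ⊗ (Xᘁ : C))
    (hp : ∀ {X Y : C} (f : X ⟶ Y), p X ≫ (f ▷ (Xᘁ : C)) = p Y ≫ (Y ◁ (fᘁ)))
    (m : A ⟶ obj), (∀ X : C, m ≫ π X = p X) → m = lift p hp

variable {C}

/-- The contraction `(X ⊗ X^∨) ⊗ (X ⊗ X^∨) ⟶ X ⊗ X^∨` of the middle two tensor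
factors by the evaluation. -/
noncomputable def contraction (X : C) :
    (X ⊗ (Xᘁ : C)) ⊗ (X ⊗ (Xᘁ : C)) ⟶ X ⊗ (Xᘁ : C) :=
  (α_ X (Xᘁ) (X ⊗ (Xᘁ : C))).hom ≫
    (X ◁ ((α_ ((Xᘁ : C)) X ((Xᘁ : C))).inv ≫ ((ε_ X (Xᘁ)) ▷ ((Xᘁ : C))) ≫
      (λ_ ((Xᘁ : C))).hom))

/-- The component at `X` of the natural endomorphism of the identity functor
associated with `f : 𝟙 ⟶ 𝔸`:
`X ≅ 𝟙 ⊗ X ⟶ 𝔸 ⊗ X ⟶ (X ⊗ X^∨) ⊗ X ≅ X ⊗ (X^∨ ⊗ X) ⟶ X ⊗ 𝟙 ≅ X`. -/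
noncomputable def component (E : CanonicalEnd C) (f : 𝟙_ C ⟶ E.obj) (X : C) :
    X ⟶ X :=
  (λ_ X).inv ≫ (f ▷ X) ≫ ((E.π X) ▷ X) ≫ (α_ X ((Xᘁ : C)) X).hom ≫
    (X ◁ (ε_ X (Xᘁ))) ≫ (ρ_ X).hom

end Stmt13

/-!
Rigid duality identifies `X ⟶ Y` with `𝟙 ⟶ Y ⊗ Xᘁ` (the name of a morphism). Under this
identification, naturality of a family of endomorphisms `a_X : X ⟶ X` is exactly the wedge
condition for their names, so the universal property of the end makes `C(𝟙, 𝔸)` the set of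
natural endomorphisms of `𝟭 C`. By a snake identity, contracting the names of `f` and `g` gives
the name of `g ≫ f`, which turns `γ` into composition; the name of `𝟙 X` is the coevaluation.
-/

namespace Stmt13

variable {C : Type*} [Category C] [MonoidalCategory C]

section Name

noncomputable def nameEquiv (X Y : C) [HasRightDual X] : (X ⟶ Y) ≃ (𝟙_ C ⟶ Y ⊗ Xᘁ) :=
  ((λ_ X).symm.homCongr (Iso.refl Y)).trans (tensorRightHomEquiv (𝟙_ C) X (Xᘁ) Y)

variable {X Y Z : C} [HasRightDual X]

theorem nameEquiv_apply (f : X ⟶ Y) : nameEquiv X Y f = η_ X (Xᘁ) ≫ f ▷ Xᘁ := by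
  rw [← Equiv.eq_symm_apply]
  simp [nameEquiv, tensorRightHomEquiv_symm_coevaluation_comp_whiskerRight]

theorem nameEquiv_symm_apply (g : 𝟙_ C ⟶ Y ⊗ Xᘁ) :
    (nameEquiv X Y).symm g =
      (λ_ X).inv ≫ g ▷ X ≫ (α_ Y (Xᘁ) X).hom ≫ Y ◁ ε_ X (Xᘁ) ≫ (ρ_ Y).hom := by
  simp [nameEquiv, tensorRightHomEquiv]

theorem nameEquiv_id : nameEquiv X X (𝟙 X) = η_ X (Xᘁ) := by
  simp [nameEquiv_apply]

theorem nameEquiv_comp (f : X ⟶ Y) (g : Y ⟶ Z) :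
    nameEquiv X Z (f ≫ g) = nameEquiv X Y f ≫ g ▷ Xᘁ := by
  simp [nameEquiv_apply]

theorem nameEquiv_comp' [HasRightDual Y] (f : X ⟶ Y) (g : Y ⟶ Z) :
    nameEquiv X Z (f ≫ g) = nameEquiv Y Z g ≫ Z ◁ fᘁ := by
  rw [nameEquiv_apply, nameEquiv_apply, Category.assoc, ← whisker_exchange,
    coevaluation_comp_rightAdjointMate_assoc, ← comp_whiskerRight]

theorem nameEquiv_comp_whiskerRight_eq_iff [HasRightDual Y] (f : X ⟶ X) (g : Y ⟶ Y)
    (h : X ⟶ Y) :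
    nameEquiv X X f ≫ h ▷ Xᘁ = nameEquiv Y Y g ≫ Y ◁ hᘁ ↔ f ≫ h = h ≫ g := by
  rw [← nameEquiv_comp, ← nameEquiv_comp', (nameEquiv X Y).apply_eq_iff_eq]

end Name

variable [RigidCategory C]

section Contraction

variable {X : C}

theorem whiskerRight_whiskerRight_contraction (f : X ⟶ X) :
    (f ▷ Xᘁ) ▷ (X ⊗ Xᘁ) ≫ contraction X = contraction X ≫ f ▷ Xᘁ := by
  rw [contraction, associator_naturality_left_assoc, Category.assoc, ← whisker_exchange]

theorem coevaluation_tensor_contraction (g : 𝟙_ C ⟶ X ⊗ Xᘁ) :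
    (λ_ (𝟙_ C)).inv ≫ (η_ X (Xᘁ) ⊗ₘ g) ≫ contraction X = g :=
  calc
    _ = g ⊗≫ (η_ X (Xᘁ) ▷ X ⊗≫ X ◁ ε_ X (Xᘁ)) ▷ Xᘁ ⊗≫ 𝟙 _ := by
      rw [tensorHom_def']; dsimp [contraction]; monoidal
    _ = g := by
      rw [ExactPairing.evaluation_coevaluation'']; monoidal

theorem nameEquiv_comp_eq_contraction (f g : X ⟶ X) :
    nameEquiv X X (f ≫ g) =
      (λ_ (𝟙_ C)).inv ≫ (nameEquiv X X g ⊗ₘ nameEquiv X X f) ≫ contraction X := by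
  rw [nameEquiv_comp, nameEquiv_apply g, ← Category.comp_id (nameEquiv X X f),
    ← tensorHom_comp_tensorHom, tensorHom_id, Category.comp_id]
  simp only [Category.assoc, whiskerRight_whiskerRight_contraction]
  slice_rhs 1 3 => rw [coevaluation_tensor_contraction]

end Contraction

section CanonicalEnd

variable (E : CanonicalEnd C)

theorem component_eq_nameEquiv_symm (f : 𝟙_ C ⟶ E.obj) (X : C) :
    component E f X = (nameEquiv X X).symm (f ≫ E.π X) := by
  simp [component, nameEquiv_symm_apply]

theorem component_comp (f : 𝟙_ C ⟶ E.obj) {X Y : C} (h : X ⟶ Y) :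
    component E f X ≫ h = h ≫ component E f Y := by
  rw [← nameEquiv_comp_whiskerRight_eq_iff, component_eq_nameEquiv_symm,
    component_eq_nameEquiv_symm, Equiv.apply_symm_apply, Equiv.apply_symm_apply,
    Category.assoc, Category.assoc, E.wedge]

noncomputable def endIdentityEquiv : (𝟙_ C ⟶ E.obj) ≃ End (𝟭 C) where
  toFun f := { app := component E f, naturality := fun _ _ h => (component_comp E f h).symm }
  invFun α := E.lift (fun X => nameEquiv X X (α.app X)) fun h =>
    (nameEquiv_comp_whiskerRight_eq_iff _ _ h).2 (α.naturality h).symm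
  left_inv f := (E.uniq _ _ f fun X => by
    dsimp only
    rw [component_eq_nameEquiv_symm, Equiv.apply_symm_apply]).symm
  right_inv α := by
    refine NatTrans.ext (funext fun X => ?_)
    simp [component_eq_nameEquiv_symm, E.fac]

theorem endIdentityEquiv_app (f : 𝟙_ C ⟶ E.obj) (X : C) :
    (endIdentityEquiv E f).app X = component E f X :=
  rfl

theorem endIdentityEquiv_add [Preadditive C] [MonoidalPreadditive C] (f g : 𝟙_ C ⟶ E.obj) :
    endIdentityEquiv E (f + g) = endIdentityEquiv E f + endIdentityEquiv E g := by
  refine NatTrans.ext (funext fun X => ?_)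
  simp [endIdentityEquiv_app, component, MonoidalPreadditive.add_whiskerRight]

theorem endIdentityEquiv_smul {k : Type*} [CommRing k] [Preadditive C] [Linear k C]
    [MonoidalPreadditive C] [MonoidalLinear k C] (a : k) (f : 𝟙_ C ⟶ E.obj) :
    endIdentityEquiv E (a • f) = a • endIdentityEquiv E f := by
  refine NatTrans.ext (funext fun X => ?_)
  rw [NatTrans.app_smul, endIdentityEquiv_app, endIdentityEquiv_app]
  simp [component, MonoidalLinear.smul_whiskerRight]

theorem endIdentityEquiv_mul {γ : E.obj ⊗ E.obj ⟶ E.obj}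
    (hγ : ∀ X : C, γ ≫ E.π X = (E.π X ⊗ₘ E.π X) ≫ contraction X)
    (f g : 𝟙_ C ⟶ E.obj) :
    endIdentityEquiv E ((λ_ (𝟙_ C)).inv ≫ (f ⊗ₘ g) ≫ γ) =
      endIdentityEquiv E f * endIdentityEquiv E g := by
  refine NatTrans.ext (funext fun X => ?_)
  have hπ : ((λ_ (𝟙_ C)).inv ≫ (f ⊗ₘ g) ≫ γ) ≫ E.π X =
      nameEquiv X X (component E g X ≫ component E f X) := by
    rw [nameEquiv_comp_eq_contraction, component_eq_nameEquiv_symm,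
      component_eq_nameEquiv_symm, Equiv.apply_symm_apply, Equiv.apply_symm_apply,
      Category.assoc, Category.assoc, hγ, tensorHom_comp_tensorHom_assoc]
  rw [End.mul_def, NatTrans.comp_app, endIdentityEquiv_app, endIdentityEquiv_app,
    endIdentityEquiv_app, component_eq_nameEquiv_symm, hπ, Equiv.symm_apply_apply]

theorem endIdentityEquiv_unit {u : 𝟙_ C ⟶ E.obj}
    (hu : ∀ X : C, u ≫ E.π X = η_ X (Xᘁ)) :
    endIdentityEquiv E u = 1 := by
  refine NatTrans.ext (funext fun X => ?_)
  rw [endIdentityEquiv_app, component_eq_nameEquiv_symm, hu, ← nameEquiv_id,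
    Equiv.symm_apply_apply]
  rfl

end CanonicalEnd

/-- `C(𝟙, 𝔸)`, with the product induced by the multiplication `γ` of the
canonical end and unit `u`, is isomorphic as a `k`-algebra to the zeroth
Hochschild cohomology `HH⁰(C) = End(𝟭_C)` via the map `Θ` whose components are
given by `component`. -/
theorem homUnitCanonicalEnd_iso_endIdentityFunctor
    (k : Type*) [CommRing k] [Preadditive C] [CategoryTheory.Linear k C]
    [MonoidalPreadditive C] [MonoidalLinear k C]
    (E : CanonicalEnd C) (γ : E.obj ⊗ E.obj ⟶ E.obj) (u : 𝟙_ C ⟶ E.obj)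
    (hγ : ∀ X : C, γ ≫ E.π X = (E.π X ⊗ₘ E.π X) ≫ contraction X)
    (hu : ∀ X : C, u ≫ E.π X = η_ X (Xᘁ)) :
    ∃ Θ : (𝟙_ C ⟶ E.obj) → CategoryTheory.End (𝟭 C),
      (∀ (f : 𝟙_ C ⟶ E.obj) (X : C), (Θ f).app X = component E f X) ∧
      Function.Bijective Θ ∧
      (∀ f g : 𝟙_ C ⟶ E.obj, Θ (f + g) = Θ f + Θ g) ∧
      (∀ (a : k) (f : 𝟙_ C ⟶ E.obj), Θ (a • f) = a • Θ f) ∧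
      (∀ f g : 𝟙_ C ⟶ E.obj,
        Θ ((λ_ (𝟙_ C)).inv ≫ (f ⊗ₘ g) ≫ γ) = Θ f * Θ g) ∧
      Θ u = 1 :=
  ⟨endIdentityEquiv E, endIdentityEquiv_app E, (endIdentityEquiv E).bijective,
    endIdentityEquiv_add E, endIdentityEquiv_smul E, endIdentityEquiv_mul E hγ,
    endIdentityEquiv_unit E hu⟩

end Stmt13
end
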